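/- For every integer r ≥ 1, the integer r² divides the integer ∑_{d ∣ r} μ(r/d)·(−1)^{d+1}·C(2d − 1, d − 1). (Equivalently, the bottom BPS invariants b⁻_r = (1/r²)·∑_{d ∣ r} μ(r/d)·(−1)^{d+1}·C(2d−1, d−1) of the twist knots K_p with p ≥ 2, whose generating data are the Catalan numbers, are integers.) -/

import Mathlib

/-!
Write `a n = (-1) ^ (n + 1) * C(2n - 1, n - 1)`. Since the squarefree divisors of `r` divisible by
a prime `p ∣ r` are the `p * e` with `p ∤ e`, the Möbius sum splits into differences
`a (p m) - a m` with `v_p(p m) = v_p(r)`, so it suffices that `p ^ (2 v_p(p m)) ∣ a (p m) - a m`.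

Let `G(p, N)` be the product of the `j ≤ N` with `p ∤ j`. Removing the multiples of `p` from the
factorials gives `C(2N - 1, N - 1) G(p, N)² = C(2m - 1, m - 1) G(p, 2N)` for `N = p m`, and
`G(p, 2N) = G(p, N) ∏ (N + j)`. Pairing `j` with `N - j` and using `(N + j)(2N - j) ≡ j (N - j)`
gives `G(p, 2N) ≡ G(p, N)² (mod N²)`. The pairing has a fixed point only for `p = 2` and `m` odd;
there the sign of `a` flips too, and `G(2, 4m) ≡ -G(2, 2m)² (mod 4)` compensates.
-/

open Finset Nat ArithmeticFunction
open scoped ArithmeticFunction.Moebius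

lemma Finset.prod_add_of_sq_eq_zero {R ι : Type*} [CommRing R] [DecidableEq ι] (s : Finset ι)
    (f : ι → R) {ε : R} (hε : ε ^ 2 = 0) :
    ∏ t ∈ s, (ε + f t) = ∏ t ∈ s, f t + ε * ∑ t ∈ s, ∏ u ∈ s.erase t, f u := by
  induction s using Finset.induction_on with
  | empty => simp
  | insert a s ha ih =>
    have herase : ∀ t ∈ s, ∏ u ∈ (insert a s).erase t, f u = f a * ∏ u ∈ s.erase t, f u :=
      fun t ht => by
        rw [erase_insert_of_ne (ne_of_mem_of_not_mem ht ha).symm,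
          prod_insert (fun h => ha (mem_of_mem_erase h))]
    rw [prod_insert ha, prod_insert ha, sum_insert ha, erase_insert ha, sum_congr rfl herase,
      ← mul_sum, ih]
    linear_combination (∑ t ∈ s, ∏ u ∈ s.erase t, f u) * hε

lemma Finset.prod_add_eq_prod_of_involution {R ι : Type*} [CommRing R] [DecidableEq ι]
    {s : Finset ι} {f : ι → R} {ε : R} (hε : ε ^ 2 = 0) (σ : ι → ι)
    (hσ : ∀ t ∈ s, σ t ∈ s) (hσσ : ∀ t ∈ s, σ (σ t) = t) (hne : ∀ t ∈ s, σ t ≠ t)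
    (hf : ∀ t ∈ s, f t + f (σ t) = ε) :
    ∏ t ∈ s, (ε + f t) = ∏ t ∈ s, f t := by
  rw [prod_add_of_sq_eq_zero s f hε, mul_sum, add_eq_left]
  refine sum_involution (fun t _ => σ t) (fun t ht => ?_) (fun t ht _ => hne t ht)
    (fun t ht => hσ t ht) (fun t ht => hσσ t ht)
  have hσt : σ t ∈ s.erase t := mem_erase.2 ⟨hne t ht, hσ t ht⟩
  have ht' : t ∈ s.erase (σ t) := mem_erase.2 ⟨(hne t ht).symm, ht⟩
  rw [← mul_prod_erase _ f hσt, ← mul_prod_erase _ f ht', erase_right_comm]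
  linear_combination (∏ u ∈ (s.erase (σ t)).erase t, f u) * (ε * hf t ht + hε)

lemma natCast_pow_dvd_of_forall_prime {r j : ℕ} {x : ℤ} (hr : r ≠ 0)
    (h : ∀ p, p.Prime → p ∣ r → (p : ℤ) ^ (j * r.factorization p) ∣ x) : (r : ℤ) ^ j ∣ x := by
  rw [← Nat.cast_pow, Int.natCast_dvd, Nat.dvd_iff_prime_pow_dvd_dvd]
  intro p k hp hpk
  have hk : k ≤ j * r.factorization p := by
    simpa using (hp.pow_dvd_iff_le_factorization (pow_ne_zero j hr)).1 hpk
  by_cases hpr : p ∣ r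
  · refine (Nat.pow_dvd_pow p hk).trans ?_
    rw [← Int.natCast_dvd]
    exact_mod_cast h p hp hpr
  · rw [Nat.factorization_eq_zero_of_not_dvd hpr, mul_zero, Nat.le_zero] at hk
    simp [hk]

lemma sum_divisors_moebius_mul_eq {p r : ℕ} (hp : p.Prime) (hpr : p ∣ r) (F : ℕ → ℤ) :
    ∑ d ∈ r.divisors, μ d * F d = ∑ d ∈ r.divisors with ¬ p ∣ d, μ d * (F d - F (p * d)) := by
  have himage : ∑ d ∈ r.divisors with p ∣ d, μ d * F d
      = ∑ d ∈ (r.divisors.filter (¬ p ∣ ·)).image (p * ·), μ d * F d := by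
    refine (sum_subset (fun d hd => ?_) fun d hd hdimage => ?_).symm
    · obtain ⟨e, he, rfl⟩ := mem_image.1 hd
      obtain ⟨her, hpe⟩ := mem_filter.1 he
      refine mem_filter.2 ⟨mem_divisors.2 ⟨?_, (mem_divisors.1 her).2⟩, dvd_mul_right p e⟩
      exact ((hp.coprime_iff_not_dvd).2 hpe).mul_dvd_of_dvd_of_dvd hpr (mem_divisors.1 her).1
    · obtain ⟨hdr, e, rfl⟩ := mem_filter.1 hd
      have hpe : p ∣ e := by
        by_contra hpe
        exact hdimage (mem_image.2 ⟨e, mem_filter.2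
          ⟨mem_divisors.2 ⟨(dvd_mul_left e p).trans (mem_divisors.1 hdr).1,
            (mem_divisors.1 hdr).2⟩, hpe⟩, rfl⟩)
      rw [moebius_eq_zero_of_not_squarefree fun hsq => hp.not_isUnit
        (hsq p (mul_dvd_mul_left p hpe)), zero_mul]
  rw [← sum_filter_not_add_sum_filter _ (p ∣ ·), himage,
    sum_image fun _ _ _ _ h => Nat.eq_of_mul_eq_mul_left hp.pos h, ← sum_add_distrib]
  refine sum_congr rfl fun d hd => ?_
  rw [isMultiplicative_moebius.map_mul_of_coprime ((hp.coprime_iff_not_dvd).2 (mem_filter.1 hd).2),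
    moebius_apply_prime hp]
  ring

lemma pow_dvd_sum_moebius_mul {f : ℕ → ℤ} {j : ℕ}
    (hf : ∀ p m : ℕ, p.Prime → m ≠ 0 → (p : ℤ) ^ (j * (p * m).factorization p) ∣ f (p * m) - f m)
    {r : ℕ} (hr : r ≠ 0) : (r : ℤ) ^ j ∣ ∑ d ∈ r.divisors, μ (r / d) * f d := by
  have hflip : ∑ d ∈ r.divisors, μ (r / d) * f d = ∑ d ∈ r.divisors, μ d * f (r / d) := by
    rw [← Nat.sum_div_divisors r fun d => μ d * f (r / d)]
    exact sum_congr rfl fun d hd => by rw [Nat.div_div_self (mem_divisors.1 hd).1 hr]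
  rw [hflip]
  refine natCast_pow_dvd_of_forall_prime hr fun p hp hpr => ?_
  rw [sum_divisors_moebius_mul_eq hp hpr]
  refine dvd_sum fun d hd => dvd_mul_of_dvd_right ?_ _
  obtain ⟨hdr, hpd⟩ := mem_filter.1 hd
  have hpdr : p * d ∣ r :=
    ((hp.coprime_iff_not_dvd).2 hpd).mul_dvd_of_dvd_of_dvd hpr (mem_divisors.1 hdr).1
  have hm : r / (p * d) ≠ 0 := (Nat.div_pos (Nat.le_of_dvd (Nat.pos_of_ne_zero hr) hpdr)
    (Nat.pos_of_dvd_of_pos hpdr (Nat.pos_of_ne_zero hr))).ne'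
  have hrd : r / d = p * (r / (p * d)) := by
    rw [← Nat.mul_div_assoc p hpdr, Nat.mul_div_mul_left _ _ hp.pos]
  have hval : (r / d).factorization p = r.factorization p := by
    simp [Nat.factorization_div (mem_divisors.1 hdr).1, Nat.factorization_eq_zero_of_not_dvd hpd]
  have := hf p (r / (p * d)) hp hm
  rwa [← hrd, hval] at this

def nonMultiples (p N : ℕ) : Finset ℕ := {j ∈ Ioc 0 N | ¬ p ∣ j}

def gaussFactorial (p N : ℕ) : ℕ := ∏ j ∈ nonMultiples p N, j

lemma mem_nonMultiples {p N j : ℕ} : j ∈ nonMultiples p N ↔ 0 < j ∧ j ≤ N ∧ ¬ p ∣ j := by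
  simp [nonMultiples, and_assoc]

lemma Nat.Prime.coprime_gaussFactorial {p : ℕ} (hp : p.Prime) (N : ℕ) :
    Coprime p (gaussFactorial p N) :=
  Coprime.prod_right fun _ hj => (hp.coprime_iff_not_dvd).2 (mem_nonMultiples.1 hj).2.2

lemma prod_Ioc_zero_id_eq_factorial (n : ℕ) : ∏ j ∈ Ioc 0 n, j = n ! :=
  prod_Ico_id_eq_factorial n

lemma factorial_mul_eq_pow_mul_factorial_mul_gaussFactorial {p : ℕ} (hp : 0 < p) (N : ℕ) :
    (p * N)! = p ^ N * N ! * gaussFactorial p (p * N) := by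
  have hmultiples : {j ∈ Ioc 0 (p * N) | p ∣ j} = (Ioc 0 N).image (p * ·) := by
    ext j
    simp only [mem_filter, mem_Ioc, mem_image]
    constructor
    · rintro ⟨⟨hj, hjN⟩, i, rfl⟩
      exact ⟨i, ⟨Nat.pos_of_mul_pos_left hj, Nat.le_of_mul_le_mul_left hjN hp⟩, rfl⟩
    · rintro ⟨i, ⟨hi, hiN⟩, rfl⟩
      exact ⟨⟨Nat.mul_pos hp hi, Nat.mul_le_mul_left p hiN⟩, dvd_mul_right p i⟩
  rw [← prod_Ioc_zero_id_eq_factorial, ← prod_filter_mul_prod_filter_not (Ioc 0 (p * N)) (p ∣ ·),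
    hmultiples, prod_image fun _ _ _ _ h => Nat.eq_of_mul_eq_mul_left hp h, prod_mul_distrib,
    prod_const, card_Ioc, Nat.sub_zero, prod_Ioc_zero_id_eq_factorial, gaussFactorial,
    nonMultiples]

lemma gaussFactorial_add {p N : ℕ} (hpN : p ∣ N) (M : ℕ) :
    gaussFactorial p (N + M) = gaussFactorial p N * ∏ j ∈ nonMultiples p M, (N + j) := by
  have hfilter : ∀ K, gaussFactorial p K = ∏ j ∈ Ioc 0 K, if p ∣ j then 1 else j := fun K => by
    rw [gaussFactorial, nonMultiples, prod_filter]
    exact prod_congr rfl fun j _ => by split_ifs <;> rfl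
  have hshift : Ioc N (N + M) = (Ioc 0 M).image (N + ·) := by simp
  rw [hfilter, hfilter, ← prod_Ioc_consecutive _ N.zero_le (N.le_add_right M), hshift,
    prod_image fun _ _ _ _ h => Nat.add_left_cancel h, nonMultiples, prod_filter]
  congr 1
  exact prod_congr rfl fun j _ => by simp only [Nat.dvd_add_right hpN]; split_ifs <;> rfl

lemma lt_of_mem_nonMultiples {p N j : ℕ} (hpN : p ∣ N) (hj : j ∈ nonMultiples p N) : j < N :=
  lt_of_le_of_ne (mem_nonMultiples.1 hj).2.1 fun h => (mem_nonMultiples.1 hj).2.2 (h ▸ hpN)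

lemma sub_mem_nonMultiples {p N j : ℕ} (hpN : p ∣ N) (hj : j ∈ nonMultiples p N) :
    N - j ∈ nonMultiples p N := by
  obtain ⟨-, hjN, hpj⟩ := mem_nonMultiples.1 hj
  have := lt_of_mem_nonMultiples hpN hj
  refine mem_nonMultiples.2 ⟨by omega, by omega, fun h => hpj ?_⟩
  simpa [Nat.sub_sub_self hjN] using Nat.dvd_sub hpN h

lemma gaussFactorial_two_mul_modEq_sq {p N : ℕ} (hpN : p ∣ N) (hmid : ∀ i, 2 * i = N → p ∣ i) :
    gaussFactorial p (2 * N) ≡ gaussFactorial p N ^ 2 [MOD N ^ 2] := by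
  have hN : (N : ZMod (N ^ 2)) ^ 2 = 0 := by rw [← Nat.cast_pow, ZMod.natCast_self]
  have hshift : ∏ j ∈ nonMultiples p N, ((N : ZMod (N ^ 2)) + j)
      = ∏ j ∈ nonMultiples p N, (j : ZMod (N ^ 2)) := by
    refine prod_add_eq_prod_of_involution hN (N - ·)
      (fun j hj => sub_mem_nonMultiples hpN hj) (fun j hj => ?_) (fun j hj hfix => ?_)
      (fun j hj => ?_)
    · have := lt_of_mem_nonMultiples hpN hj
      omega
    · exact (mem_nonMultiples.1 hj).2.2 (hmid j (by omega))
    · rw [Nat.cast_sub (lt_of_mem_nonMultiples hpN hj).le]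
      ring
  rw [← ZMod.natCast_eq_natCast_iff, two_mul, gaussFactorial_add hpN, gaussFactorial]
  push_cast
  rw [hshift, ← sq]

lemma card_nonMultiples_two_two_mul (m : ℕ) : #(nonMultiples 2 (2 * m)) = m := by
  have h := card_filter_add_card_filter_not (s := Ioc 0 (2 * m)) (2 ∣ ·)
  rw [Ioc_filter_dvd_card_eq_div, card_Ioc] at h
  rw [nonMultiples]
  omega

lemma gaussFactorial_two_four_mul {m : ℕ} (hm : Odd m) :
    (gaussFactorial 2 (2 * (2 * m)) : ZMod 4) = -(gaussFactorial 2 (2 * m) : ZMod 4) ^ 2 := by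
  have hshift : ∀ j ∈ nonMultiples 2 (2 * m), ((2 * m + j : ℕ) : ZMod 4) = -(j : ZMod 4) := by
    intro j hj
    have hj : ¬ 2 ∣ j := (mem_nonMultiples.1 hj).2.2
    refine eq_neg_of_add_eq_zero_left ?_
    rw [← Nat.cast_add, ZMod.natCast_eq_zero_iff]
    obtain ⟨a, rfl⟩ := hm
    omega
  rw [two_mul (2 * m), gaussFactorial_add (dvd_mul_right 2 m), Nat.cast_mul, Nat.cast_prod,
    prod_congr rfl hshift, prod_neg, card_nonMultiples_two_two_mul, hm.neg_one_pow, gaussFactorial,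
    Nat.cast_prod]
  ring

lemma centralBinom_eq_two_mul_choose_sub_one {n : ℕ} (hn : 0 < n) :
    centralBinom n = 2 * (2 * n - 1).choose (n - 1) := by
  obtain ⟨k, rfl⟩ := Nat.exists_eq_add_one_of_ne_zero hn.ne'
  rw [centralBinom_eq_two_mul_choose, show 2 * (k + 1) = 2 * k + 1 + 1 by ring,
    choose_succ_succ, choose_symm_half]
  simp [two_mul]

lemma centralBinom_mul_factorial_sq (n : ℕ) : centralBinom n * n ! ^ 2 = (2 * n)! := by
  have h := choose_mul_factorial_mul_factorial (show n ≤ 2 * n by omega)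
  rwa [show 2 * n - n = n by omega, mul_assoc, ← sq, ← centralBinom_eq_two_mul_choose] at h

lemma centralBinom_mul_gaussFactorial_sq {p : ℕ} (hp : 0 < p) (m : ℕ) :
    centralBinom (p * m) * gaussFactorial p (p * m) ^ 2
      = centralBinom m * gaussFactorial p (2 * (p * m)) := by
  have hX : 0 < (p ^ m * m !) ^ 2 := by positivity
  refine Nat.eq_of_mul_eq_mul_right hX ?_
  calc centralBinom (p * m) * gaussFactorial p (p * m) ^ 2 * (p ^ m * m !) ^ 2
      = centralBinom (p * m) * (p * m)! ^ 2 := by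
        rw [factorial_mul_eq_pow_mul_factorial_mul_gaussFactorial hp]; ring
    _ = (p * (2 * m))! := by rw [centralBinom_mul_factorial_sq, mul_left_comm]
    _ = centralBinom m * gaussFactorial p (2 * (p * m)) * (p ^ m * m !) ^ 2 := by
        rw [factorial_mul_eq_pow_mul_factorial_mul_gaussFactorial hp,
          ← centralBinom_mul_factorial_sq, mul_left_comm 2 p]
        ring

lemma choose_mul_gaussFactorial_sq {p m : ℕ} (hp : 0 < p) (hm : 0 < m) :
    (2 * (p * m) - 1).choose (p * m - 1) * gaussFactorial p (p * m) ^ 2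
      = (2 * m - 1).choose (m - 1) * gaussFactorial p (2 * (p * m)) := by
  have h := centralBinom_mul_gaussFactorial_sq hp m
  rw [centralBinom_eq_two_mul_choose_sub_one (Nat.mul_pos hp hm),
    centralBinom_eq_two_mul_choose_sub_one hm, mul_assoc, mul_assoc] at h
  exact Nat.eq_of_mul_eq_mul_left two_pos h

lemma prime_pow_dvd_gaussFactorial_two_mul_sub {p : ℕ} (hp : p.Prime) (m : ℕ) :
    (p : ℤ) ^ (2 * (p * m).factorization p) ∣
      gaussFactorial p (2 * (p * m)) - (-1) ^ (p * m + m) * gaussFactorial p (p * m) ^ 2 := by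
  by_cases hexc : p = 2 ∧ Odd m
  · obtain ⟨rfl, hm⟩ := hexc
    have hval : (2 * m).factorization 2 = 1 := by
      rw [Nat.factorization_mul two_ne_zero hm.pos.ne', Finsupp.add_apply,
        Nat.prime_two.factorization_self,
        Nat.factorization_eq_zero_of_not_dvd (Nat.not_even_iff_odd.2 hm ∘ even_iff_two_dvd.2)]
    rw [hval, show 2 * m + m = 3 * m by ring, ((by decide : Odd 3).mul hm).neg_one_pow,
      show ((2 : ℕ) : ℤ) ^ (2 * 1) = (4 : ℕ) by norm_num, ← ZMod.intCast_zmod_eq_zero_iff_dvd]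
    push_cast
    rw [gaussFactorial_two_four_mul hm]
    ring
  · have hmid : ∀ i, 2 * i = p * m → p ∣ i := fun i hi => by
      rcases hp.eq_two_or_odd' with rfl | hodd
      · exact (mul_left_cancel₀ two_ne_zero hi) ▸
          even_iff_two_dvd.1 (Nat.not_odd_iff_even.1 fun hm => hexc ⟨rfl, hm⟩)
      · rcases (Nat.Prime.dvd_mul hp).1 (⟨m, hi⟩ : p ∣ 2 * i) with h2 | hpi
        · exact absurd ((Nat.prime_dvd_prime_iff_eq hp Nat.prime_two).1 h2 ▸ hodd) (by decide)
        · exact hpi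
    have heven : Even (p * m + m) := by
      rw [show p * m + m = (p + 1) * m by ring]
      rcases hp.eq_two_or_odd' with rfl | hodd
      · exact (Nat.not_odd_iff_even.1 fun hm => hexc ⟨rfl, hm⟩).mul_left 3
      · exact hodd.add_one.mul_right m
    have hsq := Nat.modEq_iff_dvd.1 (gaussFactorial_two_mul_modEq_sq ⟨m, rfl⟩ hmid).symm
    push_cast at hsq
    rw [heven.neg_one_pow, one_mul]
    refine Dvd.dvd.trans ?_ hsq
    rw [pow_mul']
    exact_mod_cast pow_dvd_pow_of_dvd (Nat.ordProj_dvd (p * m) p) 2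

def twistKnotCoeff (d : ℕ) : ℤ := (-1) ^ (d + 1) * ((2 * d - 1).choose (d - 1) : ℤ)

lemma prime_pow_dvd_twistKnotCoeff_mul_sub {p m : ℕ} (hp : p.Prime) (hm : m ≠ 0) :
    (p : ℤ) ^ (2 * (p * m).factorization p) ∣ twistKnotCoeff (p * m) - twistKnotCoeff m := by
  have hkey : ((2 * (p * m) - 1).choose (p * m - 1) : ℤ) * (gaussFactorial p (p * m) : ℤ) ^ 2
      = ((2 * m - 1).choose (m - 1) : ℤ) * gaussFactorial p (2 * (p * m)) := by
    exact_mod_cast choose_mul_gaussFactorial_sq hp.pos (Nat.pos_of_ne_zero hm)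
  set A : ℤ := (gaussFactorial p (2 * (p * m)) : ℤ)
  set B : ℤ := (gaussFactorial p (p * m) : ℤ)
  set c : ℤ := ((2 * m - 1).choose (m - 1) : ℤ)
  have hsign : ((-1 : ℤ) ^ (p * m)) ^ 2 = 1 := by
    rw [← pow_mul, mul_comm, pow_mul, neg_one_sq, one_pow]
  have hfactor : (twistKnotCoeff (p * m) - twistKnotCoeff m) * B ^ 2
      = (-1) ^ (p * m + 1) * c * (A - (-1) ^ (p * m + m) * B ^ 2) := by
    rw [twistKnotCoeff, twistKnotCoeff]
    linear_combination (-(-1 : ℤ) ^ (p * m)) * hkey - c * B ^ 2 * (-1) ^ m * hsign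
  have hcop : IsCoprime ((p : ℤ) ^ (2 * (p * m).factorization p)) (B ^ 2) :=
    (Nat.isCoprime_iff_coprime.2 (hp.coprime_gaussFactorial _)).pow
  refine hcop.dvd_of_dvd_mul_right ?_
  rw [hfactor]
  exact dvd_mul_of_dvd_right (prime_pow_dvd_gaussFactorial_two_mul_sub hp m) _

/-- **Integrality of bottom BPS invariants of positive twist knots.**
For every `r ≥ 1`, `r²` divides `∑_{d ∣ r} μ(r/d)·(−1)^{d+1}·C(2d − 1, d − 1)`. -/
theorem twist_knot_pos_bottom_bps_integrality (r : ℕ) (hr : 1 ≤ r) :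
    ((r : ℤ) ^ 2) ∣ ∑ d ∈ r.divisors,
      ArithmeticFunction.moebius (r / d) * (-1) ^ (d + 1) *
        (Nat.choose (2 * d - 1) (d - 1) : ℤ) := by
  have h := pow_dvd_sum_moebius_mul (f := twistKnotCoeff)
    (fun p m hp hm => prime_pow_dvd_twistKnotCoeff_mul_sub hp hm) (by omega : r ≠ 0)
  simpa only [twistKnotCoeff, mul_assoc] using h
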